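/- There is an absolute constant C such that for every prime p and every real number B with 1 ≤ B ≤ p, one has Σ_{(b1,b2,b3,b4) ∈ 𝔇, gcd(b1 b2 b3 b4, p) = 1} | Σ_{h mod p} S(h, b̄1; p) S(h, b̄2; p) S(h, b̄3; p) S(h, b̄4; p) | ≤ C B^2 p^3, where 𝔇 is the set of quadruples (b1, b2, b3, b4) of positive integers with each bi ≤ B such that for every index i there exists an index j ≠ i with bi ≡ bj (mod p). -/

import Mathlib

open scoped Classical

/-- `e(t) = exp(2πit)`. -/
noncomputable def e2pi (t : ℝ) : ℂ := Complex.exp (2 * Real.pi * Complex.I * t)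

/-- The Kloosterman sum `S(a, b; p) = Σ_{x=1}^{p-1} e((a x + b x̄)/p)`, written as a sum
over the units of `ZMod p`. -/
noncomputable def kloosterman (p : ℕ) [NeZero p] (a b : ZMod p) : ℂ :=
  ∑ x : (ZMod p)ˣ, e2pi (((a * (x : ZMod p) + b * ((x⁻¹ : (ZMod p)ˣ) : ZMod p)).val : ℝ) / p)

section Aux

variable {p : ℕ} [Fact p.Prime]

local notation "ψ" => ZMod.stdAddChar

lemma psi_conj (x : ZMod p) : (starRingEnd ℂ) (ψ x) = ψ (-x) := by
  have h : 0 < ringChar (ZMod p) := by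
    rw [ZMod.ringChar_zmod_n]; exact (Fact.out : p.Prime).pos
  rw [AddChar.starComp_apply h, AddChar.inv_apply]

lemma psi_sum (m : ZMod p) :
    ∑ x : ZMod p, ψ (x * m) = if m = 0 then (p : ℂ) else 0 := by
  rw [AddChar.sum_mulShift m (ZMod.isPrimitive_stdAddChar p)]
  simp [ZMod.card]

lemma sum_units_eq {M : Type*} [AddCommMonoid M] (f : ZMod p → M) :
    ∑ x : (ZMod p)ˣ, f x = ∑ x ∈ Finset.univ.erase (0 : ZMod p), f x := by
  refine Finset.sum_nbij' (fun u => (u : ZMod p))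
    (fun x => if h : x = 0 then 1 else Units.mk0 x h) ?_ ?_ ?_ ?_ ?_ <;> intros <;>
    simp_all [Units.ne_zero]

lemma psi_sum_units (m : ZMod p) :
    ∑ x : (ZMod p)ˣ, ψ ((x : ZMod p) * m) = (if m = 0 then (p : ℂ) else 0) - 1 := by
  rw [sum_units_eq (fun x => ψ (x * m)), ← psi_sum m,
    ← Finset.sum_erase_add _ _ (Finset.mem_univ (0 : ZMod p))]
  simp

lemma sum_ite_coe_le (t : ZMod p) :
    ∑ y : (ZMod p)ˣ, (if (y : ZMod p) = t then (1 : ℝ) else 0) ≤ 1 := by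
  rw [Finset.sum_boole]
  norm_cast
  apply Finset.card_le_one.mpr
  intro a ha b hb
  simp only [Finset.mem_filter] at ha hb
  exact Units.ext (ha.2.trans hb.2.symm)

lemma count_pairs (t : ZMod p) :
    ∑ z : (ZMod p)ˣ × (ZMod p)ˣ, (if ((z.1 : ZMod p) + (z.2 : ZMod p)) = t then (1 : ℝ) else 0)
      ≤ (p : ℝ) := by
  rw [Fintype.sum_prod_type]
  have h1 : ∀ x : (ZMod p)ˣ,
      ∑ y : (ZMod p)ˣ, (if ((x : ZMod p) + (y : ZMod p)) = t then (1 : ℝ) else 0) ≤ 1 := by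
    intro x
    refine le_trans (le_of_eq (Finset.sum_congr rfl fun y _ => ?_))
      (sum_ite_coe_le (t - (x : ZMod p)))
    have : (((x : ZMod p) + (y : ZMod p)) = t) ↔ ((y : ZMod p) = t - (x : ZMod p)) := by
      constructor
      · intro h; rw [← h]; ring
      · intro h; rw [h]; ring
    rw [if_congr this rfl rfl]
  calc ∑ x : (ZMod p)ˣ, ∑ y : (ZMod p)ˣ, (if ((x : ZMod p) + (y : ZMod p)) = t then (1:ℝ) else 0)
      ≤ ∑ _x : (ZMod p)ˣ, (1 : ℝ) := Finset.sum_le_sum fun x _ => h1 x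
    _ = (Fintype.card (ZMod p)ˣ : ℝ) := by rw [Finset.sum_const]; simp
    _ ≤ (p : ℝ) := by
        rw [ZMod.card_units_eq_totient]
        exact_mod_cast Nat.totient_le p

lemma e2pi_val (z : ZMod p) : e2pi ((z.val : ℝ)/p) = ψ z := by
  rw [ZMod.stdAddChar_apply, ZMod.toCircle_apply, e2pi]
  push_cast
  ring_nf

lemma kloosterman_eq (a b : ZMod p) :
    kloosterman p a b =
      ∑ x : (ZMod p)ˣ, ψ (a * (x : ZMod p) + b * ((x⁻¹ : (ZMod p)ˣ) : ZMod p)) := by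
  unfold kloosterman
  exact Finset.sum_congr rfl fun x _ => e2pi_val _

/-- The fiber sum `A_c(s) = Σ_{x₁+x₂=s} ψ(c(x̄₁+x̄₂))`. -/
noncomputable def klA (p : ℕ) [Fact p.Prime] (c : ZMod p) (s : ZMod p) : ℂ :=
  ∑ z : (ZMod p)ˣ × (ZMod p)ˣ,
    if ((z.1 : ZMod p) + (z.2 : ZMod p)) = s then
      ψ (c * (((z.1⁻¹ : (ZMod p)ˣ) : ZMod p) + ((z.2⁻¹ : (ZMod p)ˣ) : ZMod p)))
    else 0

set_option maxRecDepth 8000 in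
lemma kl_sq (c h : ZMod p) :
    ∑ s : ZMod p, ψ (h * s) * klA p c s =
      kloosterman p h c * kloosterman p h c := by
  calc ∑ s : ZMod p, ψ (h * s) * klA p c s
      = ∑ s : ZMod p, ∑ z : (ZMod p)ˣ × (ZMod p)ˣ,
        if ((z.1 : ZMod p) + (z.2 : ZMod p)) = s then
          ψ (h * s) *
            ψ (c * (((z.1⁻¹ : (ZMod p)ˣ) : ZMod p) + ((z.2⁻¹ : (ZMod p)ˣ) : ZMod p)))
        else 0 := by
        refine Finset.sum_congr rfl fun s _ => ?_
        rw [klA, Finset.mul_sum]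
        exact Finset.sum_congr rfl fun z _ => by rw [mul_ite, mul_zero]
    _ = ∑ z : (ZMod p)ˣ × (ZMod p)ˣ, ∑ s : ZMod p,
        if ((z.1 : ZMod p) + (z.2 : ZMod p)) = s then
          ψ (h * s) *
            ψ (c * (((z.1⁻¹ : (ZMod p)ˣ) : ZMod p) + ((z.2⁻¹ : (ZMod p)ˣ) : ZMod p)))
        else 0 := Finset.sum_comm
    _ = ∑ z : (ZMod p)ˣ × (ZMod p)ˣ,
          ψ (h * ((z.1 : ZMod p) + (z.2 : ZMod p))) *
            ψ (c * (((z.1⁻¹ : (ZMod p)ˣ) : ZMod p) + ((z.2⁻¹ : (ZMod p)ˣ) : ZMod p))) := by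
        refine Finset.sum_congr rfl fun z _ => ?_
        rw [Finset.sum_ite_eq, if_pos (Finset.mem_univ _)]
    _ = kloosterman p h c * kloosterman p h c := by
        rw [kloosterman_eq, Finset.sum_mul_sum, Fintype.sum_prod_type]
        refine Finset.sum_congr rfl fun x _ => Finset.sum_congr rfl fun y _ => ?_
        rw [← AddChar.map_add_eq_mul, ← AddChar.map_add_eq_mul]
        congr 1
        ring

lemma parseval4 (A : ZMod p → ℂ) :
    ∑ h : ZMod p, (∑ s : ZMod p, ψ (h * s) * A s) *
        (starRingEnd ℂ) (∑ t : ZMod p, ψ (h * t) * A t) =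
      (p : ℂ) * ∑ s : ZMod p, A s * (starRingEnd ℂ) (A s) := by
  calc ∑ h : ZMod p, (∑ s : ZMod p, ψ (h * s) * A s) *
        (starRingEnd ℂ) (∑ t : ZMod p, ψ (h * t) * A t)
      = ∑ h : ZMod p, ∑ s : ZMod p, ∑ t : ZMod p,
          (A s * (starRingEnd ℂ) (A t)) * (ψ (h * s) * ψ (-(h * t))) := by
        refine Finset.sum_congr rfl fun h _ => ?_
        rw [map_sum, Finset.sum_mul_sum]
        refine Finset.sum_congr rfl fun s _ => Finset.sum_congr rfl fun t _ => ?_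
        rw [RingHom.map_mul, psi_conj]
        ring
    _ = ∑ s : ZMod p, ∑ t : ZMod p,
          (A s * (starRingEnd ℂ) (A t)) * ∑ h : ZMod p, ψ (h * (s - t)) := by
        rw [Finset.sum_comm]
        refine Finset.sum_congr rfl fun s _ => ?_
        rw [Finset.sum_comm]
        refine Finset.sum_congr rfl fun t _ => ?_
        rw [Finset.mul_sum]
        refine Finset.sum_congr rfl fun h _ => ?_
        congr 1
        rw [← AddChar.map_add_eq_mul]
        congr 1
        ring
    _ = ∑ s : ZMod p, ∑ t : ZMod p,
          (A s * (starRingEnd ℂ) (A t)) * (if s = t then (p : ℂ) else 0) := by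
        refine Finset.sum_congr rfl fun s _ => Finset.sum_congr rfl fun t _ => ?_
        rw [psi_sum]
        simp only [sub_eq_zero]
    _ = ∑ s : ZMod p, (A s * (starRingEnd ℂ) (A s)) * (p : ℂ) := by
        refine Finset.sum_congr rfl fun s _ => ?_
        simp only [mul_ite, mul_zero]
        rw [Finset.sum_ite_eq, if_pos (Finset.mem_univ _)]
    _ = (p : ℂ) * ∑ s : ZMod p, A s * (starRingEnd ℂ) (A s) := by
        rw [Finset.mul_sum]
        exact Finset.sum_congr rfl fun s _ => by ring

lemma klA_unit (c : ZMod p) (s : (ZMod p)ˣ) :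
    klA p c (s : ZMod p) = ∑ z : (ZMod p)ˣ × (ZMod p)ˣ,
      if ((z.1 : ZMod p) + (z.2 : ZMod p)) = 1 then
        ψ (((s⁻¹ : (ZMod p)ˣ) : ZMod p) *
          (c * (((z.1⁻¹ : (ZMod p)ˣ) : ZMod p) + ((z.2⁻¹ : (ZMod p)ˣ) : ZMod p))))
      else 0 := by
  rw [klA]
  refine (Fintype.sum_equiv ((Equiv.mulLeft s).prodCongr (Equiv.mulLeft s)) _ _ fun z => ?_).symm
  simp only [Equiv.prodCongr_apply, Equiv.coe_mulLeft, Prod.map]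
  have hs : (s : ZMod p) ≠ 0 := Units.ne_zero s
  have hcond : ((s * z.1 : (ZMod p)ˣ) : ZMod p) + ((s * z.2 : (ZMod p)ˣ) : ZMod p) = (s : ZMod p)
      ↔ ((z.1 : ZMod p) + (z.2 : ZMod p)) = 1 := by
    rw [Units.val_mul, Units.val_mul]
    constructor
    · intro h
      apply mul_left_cancel₀ hs
      rw [mul_add, mul_one]
      exact h
    · intro h
      rw [← mul_add, h, mul_one]
  rw [if_congr hcond rfl rfl]
  split_ifs with h
  · congr 1
    rw [mul_inv_rev, mul_inv_rev, Units.val_mul, Units.val_mul]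
    ring
  · rfl

lemma pair_rigid {u1 u2 v1 v2 : (ZMod p)ˣ}
    (hu : (u1 : ZMod p) + (u2 : ZMod p) = 1) (hv : (v1 : ZMod p) + (v2 : ZMod p) = 1)
    (hm : ((u1⁻¹ : (ZMod p)ˣ) : ZMod p) + ((u2⁻¹ : (ZMod p)ˣ) : ZMod p)
        = ((v1⁻¹ : (ZMod p)ˣ) : ZMod p) + ((v2⁻¹ : (ZMod p)ˣ) : ZMod p)) :
    (v1 = u1 ∧ v2 = u2) ∨ (v1 = u2 ∧ v2 = u1) := by
  have ha : (u1 : ZMod p) ≠ 0 := Units.ne_zero u1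
  have hb : (u2 : ZMod p) ≠ 0 := Units.ne_zero u2
  have ha' : (v1 : ZMod p) ≠ 0 := Units.ne_zero v1
  have hb' : (v2 : ZMod p) ≠ 0 := Units.ne_zero v2
  rw [Units.val_inv_eq_inv_val, Units.val_inv_eq_inv_val, Units.val_inv_eq_inv_val,
    Units.val_inv_eq_inv_val] at hm
  have hprod : (u1 : ZMod p) * u2 = (v1 : ZMod p) * v2 := by
    field_simp at hm
    linear_combination (-1 : ZMod p) * hm + ((v1 : ZMod p) * v2) * hu - ((u1 : ZMod p) * u2) * hv
  have hkey : ((v1 : ZMod p) - u1) * ((v1 : ZMod p) - u2) = 0 := by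
    linear_combination (-(v1 : ZMod p)) * hu + hprod + (v1 : ZMod p) * hv
  rcases mul_eq_zero.mp hkey with h | h
  · left
    have h1 : (v1 : ZMod p) = u1 := by rwa [sub_eq_zero] at h
    have h2 : (v2 : ZMod p) = u2 := by linear_combination hv - hu - h1
    exact ⟨Units.ext h1, Units.ext h2⟩
  · right
    have h1 : (v1 : ZMod p) = u2 := by rwa [sub_eq_zero] at h
    have h2 : (v2 : ZMod p) = u1 := by linear_combination hv - hu - h1
    exact ⟨Units.ext h1, Units.ext h2⟩

lemma sum_units_klA (c : ZMod p) (hc : c ≠ 0) :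
    ∑ s : (ZMod p)ˣ, ‖klA p c (s : ZMod p)‖ ^ 2 ≤ 2 * (p : ℝ) ^ 2 := by
  classical
  set U := (ZMod p)ˣ
  set m : U × U → ZMod p := fun z => ((z.1⁻¹ : U) : ZMod p) + ((z.2⁻¹ : U) : ZMod p) with hm_def
  set P : U × U → Prop := fun z => ((z.1 : ZMod p) + (z.2 : ZMod p)) = 1 with hP_def
  have h1 : ∑ s : U, klA p c (s : ZMod p) * (starRingEnd ℂ) (klA p c (s : ZMod p))
      = ∑ z : U × U, ∑ z' : U × U,
          if P z ∧ P z' then ((if m z = m z' then (p : ℂ) else 0) - 1) else 0 := by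
    calc ∑ s : U, klA p c (s : ZMod p) * (starRingEnd ℂ) (klA p c (s : ZMod p))
        = ∑ s : U, ∑ z : U × U, ∑ z' : U × U,
            (if P z then ψ (((s⁻¹ : U) : ZMod p) * (c * m z)) else 0) *
            (if P z' then ψ (-(((s⁻¹ : U) : ZMod p) * (c * m z'))) else 0) := by
          refine Finset.sum_congr rfl fun s _ => ?_
          rw [klA_unit, map_sum, Finset.sum_mul_sum]
          refine Finset.sum_congr rfl fun z _ => Finset.sum_congr rfl fun z' _ => ?_
          congr 1
          rw [apply_ite (starRingEnd ℂ), map_zero, psi_conj]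
      _ = ∑ z : U × U, ∑ z' : U × U, ∑ s : U,
            (if P z then ψ (((s⁻¹ : U) : ZMod p) * (c * m z)) else 0) *
            (if P z' then ψ (-(((s⁻¹ : U) : ZMod p) * (c * m z'))) else 0) := by
          rw [Finset.sum_comm]
          exact Finset.sum_congr rfl fun z _ => Finset.sum_comm
      _ = ∑ z : U × U, ∑ z' : U × U,
            if P z ∧ P z' then ∑ s : U, ψ (((s⁻¹ : U) : ZMod p) * (c * (m z - m z'))) else 0 := by
          refine Finset.sum_congr rfl fun z _ => Finset.sum_congr rfl fun z' _ => ?_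
          by_cases hz : P z
          · by_cases hz' : P z'
            · rw [if_pos ⟨hz, hz'⟩]
              refine Finset.sum_congr rfl fun s _ => ?_
              rw [if_pos hz, if_pos hz', ← AddChar.map_add_eq_mul]
              congr 1
              ring
            · rw [if_neg (fun h => hz' h.2)]
              simp [if_neg hz']
          · rw [if_neg (fun h => hz h.1)]
            simp [if_neg hz]
      _ = ∑ z : U × U, ∑ z' : U × U,
          if P z ∧ P z' then ((if m z = m z' then (p : ℂ) else 0) - 1) else 0 := by
          refine Finset.sum_congr rfl fun z _ => Finset.sum_congr rfl fun z' _ => ?_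
          refine if_congr Iff.rfl ?_ rfl
          rw [show ∑ s : U, ψ (((s⁻¹ : U) : ZMod p) * (c * (m z - m z')))
              = ∑ s : U, ψ ((s : ZMod p) * (c * (m z - m z'))) from
            Fintype.sum_equiv (Equiv.inv U) _ _ fun s => rfl]
          rw [psi_sum_units]
          congr 1
          have : (c * (m z - m z') = 0) ↔ (m z = m z') := by
            rw [mul_eq_zero, sub_eq_zero]
            simp [hc]
          rw [if_congr this rfl rfl]
  have h2 : ∑ s : U, ‖klA p c (s : ZMod p)‖ ^ 2
      = ∑ z : U × U, ∑ z' : U × U,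
          if P z ∧ P z' then ((if m z = m z' then (p : ℝ) else 0) - 1) else 0 := by
    have lhs : ((∑ s : U, ‖klA p c (s : ZMod p)‖ ^ 2 : ℝ) : ℂ)
        = ∑ s : U, klA p c (s : ZMod p) * (starRingEnd ℂ) (klA p c (s : ZMod p)) := by
      push_cast
      refine Finset.sum_congr rfl fun s _ => ?_
      rw [Complex.mul_conj]
      norm_cast
      rw [Complex.normSq_eq_norm_sq]
    have rhs : ((∑ z : U × U, ∑ z' : U × U,
          (if P z ∧ P z' then ((if m z = m z' then (p : ℝ) else 0) - 1) else 0) : ℝ) : ℂ)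
        = ∑ z : U × U, ∑ z' : U × U,
          if P z ∧ P z' then ((if m z = m z' then (p : ℂ) else 0) - 1) else 0 := by
      push_cast [apply_ite (fun x : ℝ => (x : ℂ))]
      norm_num
    apply Complex.ofReal_injective
    rw [lhs, rhs, h1]
  rw [h2]
  have step1 : ∑ z : U × U, ∑ z' : U × U,
        (if P z ∧ P z' then ((if m z = m z' then (p : ℝ) else 0) - 1) else 0)
      ≤ ∑ z : U × U, ∑ z' : U × U,
        (if P z ∧ P z' ∧ m z = m z' then (p : ℝ) else 0) := by
    refine Finset.sum_le_sum fun z _ => Finset.sum_le_sum fun z' _ => ?_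
    have hp0 : (0 : ℝ) ≤ p := Nat.cast_nonneg p
    by_cases h : P z ∧ P z'
    · rw [if_pos h]
      by_cases h' : m z = m z'
      · rw [if_pos h', if_pos ⟨h.1, h.2, h'⟩]; linarith
      · rw [if_neg h', if_neg (fun hh => h' hh.2.2)]; linarith
    · rw [if_neg h, if_neg (fun hh : P z ∧ P z' ∧ m z = m z' => h ⟨hh.1, hh.2.1⟩)]
  have step2 : ∀ z : U × U, ∑ z' : U × U,
        (if P z ∧ P z' ∧ m z = m z' then (p : ℝ) else 0)
      ≤ (if P z then (1:ℝ) else 0) * (2 * p) := by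
    intro z
    by_cases hz : P z
    · have pt : ∀ z' : U × U, (if P z ∧ P z' ∧ m z = m z' then (p : ℝ) else 0)
          ≤ (if z' = z then (p:ℝ) else 0) + (if z' = (z.2, z.1) then (p:ℝ) else 0) := by
        intro z'
        have hp0 : (0 : ℝ) ≤ p := Nat.cast_nonneg p
        by_cases h : P z ∧ P z' ∧ m z = m z'
        · rcases pair_rigid h.1 h.2.1 h.2.2 with ⟨e1, e2⟩ | ⟨e1, e2⟩
          · have hzz : z' = z := Prod.ext e1 e2
            rw [if_pos h, hzz, if_pos rfl]
            have hn : (0:ℝ) ≤ (if z = (z.2, z.1) then (p:ℝ) else 0) := by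
              split_ifs
              exacts [hp0, le_refl 0]
            linarith
          · have hzz : z' = (z.2, z.1) := Prod.ext e1 e2
            rw [if_pos h, hzz, if_pos rfl]
            have hn : (0:ℝ) ≤ (if (z.2, z.1) = z then (p:ℝ) else 0) := by
              split_ifs
              exacts [hp0, le_refl 0]
            linarith
        · rw [if_neg h]
          split_ifs <;> linarith
      calc ∑ z' : U × U, (if P z ∧ P z' ∧ m z = m z' then (p : ℝ) else 0)
          ≤ ∑ z' : U × U, ((if z' = z then (p:ℝ) else 0) + (if z' = (z.2, z.1) then (p:ℝ) else 0)) :=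
            Finset.sum_le_sum fun z' _ => pt z'
        _ = (p : ℝ) + (p : ℝ) := by
            rw [Finset.sum_add_distrib, Finset.sum_ite_eq', Finset.sum_ite_eq']
            simp
        _ = (if P z then (1:ℝ) else 0) * (2 * p) := by rw [if_pos hz]; ring
    · have hz0 : ∀ z' : U × U, (if P z ∧ P z' ∧ m z = m z' then (p : ℝ) else 0) = 0 :=
        fun z' => if_neg (fun h => hz h.1)
      simp [hz0, if_neg hz]
  calc ∑ z : U × U, ∑ z' : U × U,
        (if P z ∧ P z' then ((if m z = m z' then (p : ℝ) else 0) - 1) else 0)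
      ≤ ∑ z : U × U, (if P z then (1:ℝ) else 0) * (2 * p) :=
        le_trans step1 (Finset.sum_le_sum fun z _ => step2 z)
    _ = (∑ z : U × U, (if P z then (1:ℝ) else 0)) * (2 * p) := by
        rw [Finset.sum_mul]
    _ ≤ (p : ℝ) * (2 * p) := by
        have h2p : (0:ℝ) ≤ 2 * p := by positivity
        exact mul_le_mul_of_nonneg_right (count_pairs 1) h2p
    _ = 2 * (p : ℝ) ^ 2 := by ring

lemma klA_zero_norm (c : ZMod p) : ‖klA p c 0‖ ≤ (p : ℝ) := by
  rw [klA]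
  refine le_trans (norm_sum_le _ _) (le_trans (le_of_eq
    (Finset.sum_congr rfl fun z _ => ?_)) (count_pairs 0))
  split_ifs with h
  · rw [ZMod.stdAddChar_apply, Circle.norm_coe]
  · rw [norm_zero]

lemma kl_fourth_moment (c : ZMod p) (hc : c ≠ 0) :
    ∑ h : ZMod p, ‖kloosterman p h c‖ ^ 4 ≤ 3 * (p : ℝ) ^ 3 := by
  have c1 : ∀ h : ZMod p, ((‖kloosterman p h c‖ ^ 4 : ℝ) : ℂ)
      = (∑ s : ZMod p, ψ (h * s) * klA p c s) *
        (starRingEnd ℂ) (∑ t : ZMod p, ψ (h * t) * klA p c t) := by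
    intro h
    rw [kl_sq, Complex.mul_conj]
    norm_cast
    rw [Complex.normSq_eq_norm_sq, norm_mul]
    ring
  have key : ∑ h : ZMod p, ‖kloosterman p h c‖ ^ 4
      = (p : ℝ) * ∑ s : ZMod p, ‖klA p c s‖ ^ 2 := by
    apply Complex.ofReal_injective
    push_cast
    calc ∑ h : ZMod p, ((‖kloosterman p h c‖ : ℂ)) ^ 4
        = ∑ h : ZMod p, (∑ s : ZMod p, ψ (h * s) * klA p c s) *
            (starRingEnd ℂ) (∑ t : ZMod p, ψ (h * t) * klA p c t) := by
          refine Finset.sum_congr rfl fun h _ => ?_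
          rw [← c1 h]
          push_cast
          ring
      _ = (p : ℂ) * ∑ s : ZMod p, klA p c s * (starRingEnd ℂ) (klA p c s) := parseval4 _
      _ = (p : ℂ) * ∑ s : ZMod p, ((‖klA p c s‖ : ℂ)) ^ 2 := by
          congr 1
          refine Finset.sum_congr rfl fun s _ => ?_
          rw [Complex.mul_conj]
          norm_cast
          rw [Complex.normSq_eq_norm_sq]
  rw [key]
  have hsplit : ∑ s : ZMod p, ‖klA p c s‖ ^ 2
      = ∑ s ∈ Finset.univ.erase (0 : ZMod p), ‖klA p c s‖ ^ 2 + ‖klA p c 0‖ ^ 2 :=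
    (Finset.sum_erase_add _ _ (Finset.mem_univ (0 : ZMod p))).symm
  have hunits : ∑ s ∈ Finset.univ.erase (0 : ZMod p), ‖klA p c s‖ ^ 2
      = ∑ s : (ZMod p)ˣ, ‖klA p c (s : ZMod p)‖ ^ 2 :=
    (sum_units_eq (fun s => ‖klA p c s‖ ^ 2)).symm
  have hzero : ‖klA p c 0‖ ^ 2 ≤ (p : ℝ) ^ 2 :=
    pow_le_pow_left₀ (norm_nonneg _) (klA_zero_norm c) 2
  have hbound : ∑ s : ZMod p, ‖klA p c s‖ ^ 2 ≤ 3 * (p : ℝ) ^ 2 := by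
    rw [hsplit, hunits]
    have := sum_units_klA c hc
    linarith
  have hp0 : (0 : ℝ) ≤ p := Nat.cast_nonneg p
  calc (p : ℝ) * ∑ s : ZMod p, ‖klA p c s‖ ^ 2
      ≤ (p : ℝ) * (3 * (p : ℝ) ^ 2) := mul_le_mul_of_nonneg_left hbound hp0
    _ = 3 * (p : ℝ) ^ 3 := by ring

lemma amgm4 (a : Fin 4 → ℝ) (ha : ∀ i, 0 ≤ a i) :
    ∏ i, a i ≤ (∑ i, (a i) ^ 4) / 4 := by
  rw [Fin.prod_univ_four, Fin.sum_univ_four]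
  nlinarith [sq_nonneg (a 0 * a 1 - a 2 * a 3), sq_nonneg ((a 0)^2 - (a 1)^2),
    sq_nonneg ((a 2)^2 - (a 3)^2), mul_nonneg (ha 0) (ha 1), mul_nonneg (ha 2) (ha 3)]

lemma quad_bound (c : Fin 4 → ZMod p) (hc : ∀ i, c i ≠ 0) :
    ‖∑ h : ZMod p, ∏ i : Fin 4, kloosterman p h (c i)‖ ≤ 3 * (p : ℝ) ^ 3 := by
  calc ‖∑ h : ZMod p, ∏ i : Fin 4, kloosterman p h (c i)‖
      ≤ ∑ h : ZMod p, ‖∏ i : Fin 4, kloosterman p h (c i)‖ := norm_sum_le _ _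
    _ = ∑ h : ZMod p, ∏ i : Fin 4, ‖kloosterman p h (c i)‖ :=
        Finset.sum_congr rfl fun h _ => norm_prod _ _
    _ ≤ ∑ h : ZMod p, (∑ i : Fin 4, ‖kloosterman p h (c i)‖ ^ 4) / 4 :=
        Finset.sum_le_sum fun h _ => amgm4 _ (fun i => norm_nonneg _)
    _ = (∑ i : Fin 4, ∑ h : ZMod p, ‖kloosterman p h (c i)‖ ^ 4) / 4 := by
        rw [← Finset.sum_div, Finset.sum_comm]
    _ ≤ (4 * (3 * (p : ℝ) ^ 3)) / 4 := by
        have hs := Finset.sum_le_sum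
          (fun (i : Fin 4) (_ : i ∈ Finset.univ) => kl_fourth_moment (c i) (hc i))
        have hconst : ∑ _i : Fin 4, 3 * (p:ℝ)^3 = 4 * (3 * (p:ℝ)^3) := by
          rw [Finset.sum_const, Finset.card_univ, Fintype.card_fin, nsmul_eq_mul]
          norm_num
        rw [hconst] at hs
        linarith
    _ = 3 * (p : ℝ) ^ 3 := by ring

lemma cast_inj_Icc {a b : ℕ} (ha1 : 1 ≤ a) (hap : a ≤ p) (hb1 : 1 ≤ b) (hbp : b ≤ p)
    (h : (a : ZMod p) = (b : ZMod p)) : a = b := by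
  have hplt : 1 < p := (Fact.out : p.Prime).one_lt
  rcases eq_or_lt_of_le hap with rfl | hap'
  · rcases eq_or_lt_of_le hbp with rfl | hbp'
    · rfl
    · exfalso
      rw [ZMod.natCast_self] at h
      have : a ∣ b := (ZMod.natCast_eq_zero_iff b a).mp h.symm
      exact absurd (Nat.le_of_dvd (by omega) this) (by omega)
  · rcases eq_or_lt_of_le hbp with rfl | hbp'
    · exfalso
      rw [ZMod.natCast_self] at h
      have : b ∣ a := (ZMod.natCast_eq_zero_iff a b).mp h
      exact absurd (Nat.le_of_dvd (by omega) this) (by omega)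
    · have := congrArg ZMod.val h
      rwa [ZMod.val_cast_of_lt hap', ZMod.val_cast_of_lt hbp'] at this

end Aux

lemma match4 {b : Fin 4 → ℕ} (h : ∀ i : Fin 4, ∃ j, j ≠ i ∧ b i = b j) :
    (b 0 = b 1 ∧ b 2 = b 3) ∨ (b 0 = b 2 ∧ b 1 = b 3) ∨ (b 0 = b 3 ∧ b 1 = b 2) := by
  obtain ⟨j0, hj0, e0⟩ := h 0
  obtain ⟨j1, hj1, e1⟩ := h 1
  obtain ⟨j2, hj2, e2⟩ := h 2
  obtain ⟨j3, hj3, e3⟩ := h 3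
  have h4 : ∀ j : Fin 4, j = 0 ∨ j = 1 ∨ j = 2 ∨ j = 3 := by decide
  rcases h4 j0 with rfl|rfl|rfl|rfl <;> rcases h4 j1 with rfl|rfl|rfl|rfl <;>
    rcases h4 j2 with rfl|rfl|rfl|rfl <;> rcases h4 j3 with rfl|rfl|rfl|rfl <;>
    first
      | exact absurd rfl hj0
      | exact absurd rfl hj1
      | exact absurd rfl hj2
      | exact absurd rfl hj3
      | omega


/-- The "diagonal" (mirror configuration) contribution in Lemma 1 of Khan–Ngo:
there is an absolute constant `C` such that for every prime `p` and every real
`1 ≤ B ≤ p`, the sum over quadruples `(b₁,b₂,b₃,b₄) ∈ 𝔇` of positive integers `≤ B`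
coprime to `p` — where `𝔇` consists of the quadruples in which every component is
congruent mod `p` to some other component — of
`|Σ_{h mod p} S(h,b̄₁;p)S(h,b̄₂;p)S(h,b̄₃;p)S(h,b̄₄;p)|` is at most `C B² p³`. -/
theorem sum_product_four_kloosterman_mirror :
    ∃ C : ℝ, 0 < C ∧ ∀ p : ℕ, ∀ hp : p.Prime, ∀ B : ℝ, 1 ≤ B → B ≤ p →
      haveI : NeZero p := ⟨hp.ne_zero⟩
      ∑ b ∈ Fintype.piFinset (fun _ : Fin 4 => Finset.Icc 1 ⌊B⌋₊),
        (if (∀ i : Fin 4, ∃ j : Fin 4, j ≠ i ∧ ((b i : ℕ) : ZMod p) = ((b j : ℕ) : ZMod p)) ∧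
            Nat.Coprime (b 0 * b 1 * b 2 * b 3) p then
          ‖∑ h : ZMod p, ∏ i : Fin 4, kloosterman p h (((b i : ℕ) : ZMod p))⁻¹‖ else 0)
      ≤ C * (B ^ 2 * (p : ℝ) ^ 3) := by
  classical
  refine ⟨9, by norm_num, ?_⟩
  intro p hp B hB1 hBp
  haveI : Fact p.Prime := ⟨hp⟩
  haveI : NeZero p := ⟨hp.ne_zero⟩
  set N := ⌊B⌋₊ with hNdef
  have hB0 : (0 : ℝ) ≤ B := by linarith
  have hNB : (N : ℝ) ≤ B := Nat.floor_le hB0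
  have hNp : N ≤ p := by
    have h2 : (N : ℝ) ≤ (p : ℝ) := le_trans hNB hBp
    exact_mod_cast h2
  set P := Fintype.piFinset (fun _ : Fin 4 => Finset.Icc 1 N) with hPdef
  have hp3 : (0 : ℝ) ≤ 3 * (p : ℝ) ^ 3 := by positivity
  have h4 : ∀ j : Fin 4, j = 0 ∨ j = 1 ∨ j = 2 ∨ j = 3 := by decide
  set MC : (Fin 4 → ℕ) → Prop := fun b =>
    (b 0 = b 1 ∧ b 2 = b 3) ∨ (b 0 = b 2 ∧ b 1 = b 3) ∨ (b 0 = b 3 ∧ b 1 = b 2) with hMC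
  have point : ∀ b ∈ P,
      (if (∀ i : Fin 4, ∃ j : Fin 4, j ≠ i ∧ ((b i : ℕ) : ZMod p) = ((b j : ℕ) : ZMod p)) ∧
            Nat.Coprime (b 0 * b 1 * b 2 * b 3) p then
          ‖∑ h : ZMod p, ∏ i : Fin 4, kloosterman p h (((b i : ℕ) : ZMod p))⁻¹‖ else 0)
      ≤ (if MC b then 3 * (p : ℝ) ^ 3 else 0) := by
    intro b hb
    have hmem : ∀ i, b i ∈ Finset.Icc 1 N := fun i => Fintype.mem_piFinset.mp hb i
    split_ifs with hcond hmc hmc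
    · -- condition holds and MC holds
      have hne0 : ∀ i : Fin 4, ((b i : ℕ) : ZMod p) ≠ 0 := by
        intro i h0
        have hdvd : p ∣ b i := (ZMod.natCast_eq_zero_iff _ p).mp h0
        have hd4 : b i ∣ b 0 * b 1 * b 2 * b 3 := by
          rcases h4 i with rfl | rfl | rfl | rfl
          · exact ⟨b 1 * b 2 * b 3, by ring⟩
          · exact ⟨b 0 * b 2 * b 3, by ring⟩
          · exact ⟨b 0 * b 1 * b 3, by ring⟩
          · exact ⟨b 0 * b 1 * b 2, by ring⟩
        have hpd : p ∣ b 0 * b 1 * b 2 * b 3 := dvd_trans hdvd hd4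
        have hone : p = 1 := (Nat.Coprime.symm hcond.2).eq_one_of_dvd hpd
        exact absurd hone hp.one_lt.ne'
      exact quad_bound _ (fun i => inv_ne_zero (hne0 i))
    · -- condition holds but MC fails: impossible
      exfalso
      apply hmc
      refine match4 ?_
      intro i
      obtain ⟨j, hj, hcast⟩ := hcond.1 i
      refine ⟨j, hj, ?_⟩
      have hi := Finset.mem_Icc.mp (hmem i)
      have hjm := Finset.mem_Icc.mp (hmem j)
      exact cast_inj_Icc hi.1 (le_trans hi.2 hNp) hjm.1 (le_trans hjm.2 hNp) hcast
    · exact hp3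
    · exact le_refl 0
  have hcard1 : ∀ Q : (Fin 4 → ℕ) → Prop, ∀ _ : DecidablePred Q, ∀ k l : Fin 4,
      (∀ b b' : Fin 4 → ℕ, Q b → Q b' → b k = b' k → b l = b' l → b = b') →
      (P.filter Q).card ≤ N ^ 2 := by
    intro Q _ k l hinj
    have hle : (P.filter Q).card ≤ ((Finset.Icc 1 N) ×ˢ (Finset.Icc 1 N)).card := by
      apply Finset.card_le_card_of_injOn (fun b => (b k, b l))
      · intro b hb
        rcases Finset.mem_filter.mp hb with ⟨hbP, _⟩
        have hmem := fun i => Fintype.mem_piFinset.mp hbP i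
        exact Finset.mem_product.mpr ⟨hmem k, hmem l⟩
      · intro b hb b' hb' heq
        rcases Finset.mem_filter.mp (Finset.mem_coe.mp hb) with ⟨_, hc⟩
        rcases Finset.mem_filter.mp (Finset.mem_coe.mp hb') with ⟨_, hc'⟩
        exact hinj b b' hc hc' (congrArg Prod.fst heq) (congrArg Prod.snd heq)
    calc (P.filter Q).card ≤ ((Finset.Icc 1 N) ×ˢ (Finset.Icc 1 N)).card := hle
      _ = N ^ 2 := by
          rw [Finset.card_product, Nat.card_Icc]
          simp [pow_two]
  have extfun : ∀ b b' : Fin 4 → ℕ, b 0 = b' 0 → b 1 = b' 1 → b 2 = b' 2 → b 3 = b' 3 →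
      b = b' := by
    intro b b' f0 f1 f2 f3
    funext i
    rcases h4 i with rfl | rfl | rfl | rfl
    exacts [f0, f1, f2, f3]
  have e1 : (P.filter (fun b => b 0 = b 1 ∧ b 2 = b 3)).card ≤ N ^ 2 := by
    refine hcard1 _ _ 0 2 ?_
    intro b b' hc hc' hk hl
    exact extfun b b' hk (hc.1.symm.trans (hk.trans hc'.1)) hl
      (hc.2.symm.trans (hl.trans hc'.2))
  have e2 : (P.filter (fun b => b 0 = b 2 ∧ b 1 = b 3)).card ≤ N ^ 2 := by
    refine hcard1 _ _ 0 1 ?_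
    intro b b' hc hc' hk hl
    exact extfun b b' hk hl (hc.1.symm.trans (hk.trans hc'.1))
      (hc.2.symm.trans (hl.trans hc'.2))
  have e3 : (P.filter (fun b => b 0 = b 3 ∧ b 1 = b 2)).card ≤ N ^ 2 := by
    refine hcard1 _ _ 0 1 ?_
    intro b b' hc hc' hk hl
    exact extfun b b' hk hl (hc.2.symm.trans (hl.trans hc'.2))
      (hc.1.symm.trans (hk.trans hc'.1))
  have hsub : P.filter MC ⊆ (P.filter (fun b => b 0 = b 1 ∧ b 2 = b 3)) ∪
      ((P.filter (fun b => b 0 = b 2 ∧ b 1 = b 3)) ∪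
        (P.filter (fun b => b 0 = b 3 ∧ b 1 = b 2))) := by
    intro b hb
    rcases Finset.mem_filter.mp hb with ⟨hbP, hmcb⟩
    rcases hmcb with h | h | h
    · exact Finset.mem_union_left _ (Finset.mem_filter.mpr ⟨hbP, h⟩)
    · exact Finset.mem_union_right _ (Finset.mem_union_left _ (Finset.mem_filter.mpr ⟨hbP, h⟩))
    · exact Finset.mem_union_right _ (Finset.mem_union_right _ (Finset.mem_filter.mpr ⟨hbP, h⟩))
  have hcard : ((P.filter MC).card : ℝ) ≤ 3 * (N : ℝ) ^ 2 := by
    have h1 : (P.filter MC).card ≤ 3 * N ^ 2 := by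
      calc (P.filter MC).card
          ≤ ((P.filter (fun b => b 0 = b 1 ∧ b 2 = b 3)) ∪
              ((P.filter (fun b => b 0 = b 2 ∧ b 1 = b 3)) ∪
                (P.filter (fun b => b 0 = b 3 ∧ b 1 = b 2)))).card := Finset.card_le_card hsub
        _ ≤ (P.filter (fun b => b 0 = b 1 ∧ b 2 = b 3)).card +
            ((P.filter (fun b => b 0 = b 2 ∧ b 1 = b 3)) ∪
              (P.filter (fun b => b 0 = b 3 ∧ b 1 = b 2))).card := Finset.card_union_le _ _
        _ ≤ (P.filter (fun b => b 0 = b 1 ∧ b 2 = b 3)).card +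
            ((P.filter (fun b => b 0 = b 2 ∧ b 1 = b 3)).card +
              (P.filter (fun b => b 0 = b 3 ∧ b 1 = b 2)).card) :=
            Nat.add_le_add_left (Finset.card_union_le _ _) _
        _ ≤ N ^ 2 + (N ^ 2 + N ^ 2) := add_le_add e1 (add_le_add e2 e3)
        _ = 3 * N ^ 2 := by ring
    calc ((P.filter MC).card : ℝ) ≤ ((3 * N ^ 2 : ℕ) : ℝ) := Nat.cast_le.mpr h1
      _ = 3 * (N : ℝ) ^ 2 := by push_cast; ring
  calc ∑ b ∈ P,
        (if (∀ i : Fin 4, ∃ j : Fin 4, j ≠ i ∧ ((b i : ℕ) : ZMod p) = ((b j : ℕ) : ZMod p)) ∧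
            Nat.Coprime (b 0 * b 1 * b 2 * b 3) p then
          ‖∑ h : ZMod p, ∏ i : Fin 4, kloosterman p h (((b i : ℕ) : ZMod p))⁻¹‖ else 0)
      ≤ ∑ b ∈ P, (if MC b then 3 * (p : ℝ) ^ 3 else 0) := Finset.sum_le_sum point
    _ = ∑ _b ∈ P.filter MC, 3 * (p : ℝ) ^ 3 := (Finset.sum_filter _ _).symm
    _ = ((P.filter MC).card : ℝ) * (3 * (p : ℝ) ^ 3) := by
        rw [Finset.sum_const, nsmul_eq_mul]
    _ ≤ (3 * (N : ℝ) ^ 2) * (3 * (p : ℝ) ^ 3) := mul_le_mul_of_nonneg_right hcard hp3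
    _ ≤ 9 * (B ^ 2 * (p : ℝ) ^ 3) := by
        have hN2 : (N : ℝ) ^ 2 ≤ B ^ 2 := pow_le_pow_left₀ (Nat.cast_nonneg N) hNB 2
        nlinarith [pow_nonneg (Nat.cast_nonneg (α := ℝ) p) 3]
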